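/- Let x, y ∈ Hⁿ and w, z ∈ ℝ^{n+1} with ⟨w, w⟩ = ⟨z, z⟩ = 1, ⟨x, w⟩ = ⟨y, z⟩ = 0, so that α(t) = cosh(t)·x + sinh(t)·w and β(t) = cosh(t)·y + sinh(t)·z are unit-speed geodesics in Hⁿ. Fix l > 0 and define γ(t) = P₁(α(t), β(t)) and δ(t) = P₂(α(t), β(t)). Then for every t ∈ [0, l], γ(t) lies on the line segment in ℝⁿ joining γ(0) and γ(l), and δ(t) lies on the line segment joining δ(0) and δ(l); moreover ‖γ(0) − γ(l)‖ = ‖δ(0) − δ(l)‖. In particular, Φ maps a pair of geodesic segments of the same length in Hⁿ to a pair of line segments of the same length in ℝⁿ. -/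

import Mathlib

open scoped BigOperators

noncomputable section

/-- The Minkowski product on `ℝ^{n+1}`: `⟨x,y⟩ = -x₀y₀ + ∑_{i=1}^n xᵢyᵢ`. -/
def mink {n : ℕ} (x y : Fin (n + 1) → ℝ) : ℝ :=
  -(x 0 * y 0) + ∑ i : Fin n, x i.succ * y i.succ

/-- The vector `e = (1, 0, …, 0)` in `ℝ^{n+1}`. -/
def eVec (n : ℕ) : Fin (n + 1) → ℝ := fun i => if i = 0 then 1 else 0

/-- Projection `𝒫 : ℝ^{n+1} → ℝⁿ`, forgetting the 0-th coordinate, landing in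
Euclidean space (with the Euclidean norm). -/
def proj {n : ℕ} (x : Fin (n + 1) → ℝ) : EuclideanSpace ℝ (Fin n) :=
  WithLp.toLp 2 (fun i : Fin n => x i.succ)

/-- The hyperboloid model `Hⁿ = {x : ⟨x,x⟩ = -1, x₀ > 0}`. -/
def Hyp (n : ℕ) : Set (Fin (n + 1) → ℝ) := {x | mink x x = -1 ∧ 0 < x 0}

/-- First component of the Pogorelov map: `P₁(x,y) = 2𝒫(x)/(-⟨x+y,e⟩)`. -/
def P1 {n : ℕ} (x y : Fin (n + 1) → ℝ) : EuclideanSpace ℝ (Fin n) :=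
  (2 / (-(mink (x + y) (eVec n)))) • proj x

/-- Second component of the Pogorelov map: `P₂(x,y) = 2𝒫(y)/(-⟨x+y,e⟩)`. -/
def P2 {n : ℕ} (x y : Fin (n + 1) → ℝ) : EuclideanSpace ℝ (Fin n) :=
  (2 / (-(mink (x + y) (eVec n)))) • proj y

/-- The function `f(a,b) = (2+‖a‖+‖b‖)(2-‖a‖+‖b‖)(2+‖a‖-‖b‖)(2-‖a‖-‖b‖)`. -/
def fQ {n : ℕ} (a b : EuclideanSpace ℝ (Fin n)) : ℝ :=
  (2 + ‖a‖ + ‖b‖) * (2 - ‖a‖ + ‖b‖) * (2 + ‖a‖ - ‖b‖) * (2 - ‖a‖ - ‖b‖)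

/-- The vector in `ℝ^{n+1}` with 0-th coordinate `t` and `𝒫`-projection `v`. -/
def liftVec {n : ℕ} (t : ℝ) (v : EuclideanSpace ℝ (Fin n)) : Fin (n + 1) → ℝ :=
  Fin.cons t (fun i => v i)

/-- First component of `Ψ(a,b)`, namely `(√(‖x̂‖²+1), x̂)` with `x̂ = 4a/√f(a,b)`. -/
def Psi1 {n : ℕ} (a b : EuclideanSpace ℝ (Fin n)) : Fin (n + 1) → ℝ :=
  liftVec (Real.sqrt (‖(4 / Real.sqrt (fQ a b)) • a‖ ^ 2 + 1)) ((4 / Real.sqrt (fQ a b)) • a)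

/-- Second component of `Ψ(a,b)`, namely `(√(‖ŷ‖²+1), ŷ)` with `ŷ = 4b/√f(a,b)`. -/
def Psi2 {n : ℕ} (a b : EuclideanSpace ℝ (Fin n)) : Fin (n + 1) → ℝ :=
  liftVec (Real.sqrt (‖(4 / Real.sqrt (fQ a b)) • b‖ ^ 2 + 1)) ((4 / Real.sqrt (fQ a b)) • b)


/-! For `t ∈ [0, l]`, `(α t, β t) = λ • (α 0, β 0) + μ • (α l, β l)` with the nonnegative weights
`λ = sinh (l - t) / sinh l` and `μ = sinh t / sinh l`, and `P₁(u, v)` is the perspective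
`V / X` of the data `X = (u + v)₀`, `V = 2 𝒫 u`, which depend linearly on `(u, v)`. A perspective
map sends nonnegative combinations into the segment between the images, so `γ` and `δ` trace
segments.

For the lengths use `‖𝒫 v‖² = ⟨v, v⟩ + v₀²`. The Minkowski parts of `γ 0 - γ l` and `δ 0 - δ l`
agree because `⟨x, α l⟩ = ⟨y, β l⟩ = -cosh l`, and their time coordinates are opposite because
`P₁` and `P₂` share the normalisation `2 / (u + v)₀`. -/

open Real

theorem perspective_mem_segment {E : Type*} [AddCommGroup E] [Module ℝ E] {X₁ X₂ a b : ℝ}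
    (hX₁ : 0 < X₁) (hX₂ : 0 < X₂) (ha : 0 ≤ a) (hb : 0 ≤ b) (hab : 0 < a * X₁ + b * X₂)
    (V₁ V₂ : E) :
    (a * X₁ + b * X₂)⁻¹ • (a • V₁ + b • V₂) ∈ segment ℝ (X₁⁻¹ • V₁) (X₂⁻¹ • V₂) := by
  refine mem_segment_iff_div.mpr ⟨a * X₁, b * X₂, by positivity, by positivity, hab, ?_⟩
  simp only [smul_smul, smul_add]
  congr 2 <;> field_simp

theorem cosh_smul_add_sinh_smul_eq {E : Type*} [AddCommGroup E] [Module ℝ E] {l : ℝ}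
    (hl : sinh l ≠ 0) (t : ℝ) (x w : E) :
    cosh t • x + sinh t • w =
      (sinh (l - t) / sinh l) • x + (sinh t / sinh l) • (cosh l • x + sinh l • w) := by
  rw [sinh_sub]
  match_scalars
  · field_simp
    ring
  · field_simp

section Minkowski

variable {n : ℕ}

theorem mink_comm (x y : Fin (n + 1) → ℝ) : mink x y = mink y x := by
  simp only [mink, mul_comm]

theorem mink_smul_add_smul_right (v x w : Fin (n + 1) → ℝ) (a b : ℝ) :
    mink v (a • x + b • w) = a * mink v x + b * mink v w := by
  simp only [mink, Pi.add_apply, Pi.smul_apply, smul_eq_mul, mul_add, Finset.sum_add_distrib,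
    Finset.mul_sum]
  ring_nf

theorem mink_smul_add_smul_self (x w : Fin (n + 1) → ℝ) (a b : ℝ) :
    mink (a • x + b • w) (a • x + b • w) =
      a ^ 2 * mink x x + 2 * a * b * mink x w + b ^ 2 * mink w w := by
  rw [mink_smul_add_smul_right, mink_comm _ x, mink_comm _ w, mink_smul_add_smul_right,
    mink_smul_add_smul_right, mink_comm w x]
  ring

theorem mink_eVec (v : Fin (n + 1) → ℝ) : mink v (eVec n) = -v 0 := by
  simp [mink, eVec, Fin.succ_ne_zero]

theorem inner_proj (x y : Fin (n + 1) → ℝ) :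
    inner ℝ (proj x) (proj y) = mink x y + x 0 * y 0 := by
  simp [proj, mink, PiLp.inner_apply, mul_comm]

theorem norm_proj_sq (x : Fin (n + 1) → ℝ) : ‖proj x‖ ^ 2 = mink x x + x 0 ^ 2 := by
  rw [← real_inner_self_eq_norm_sq, inner_proj, sq]

theorem proj_smul_add_smul (x w : Fin (n + 1) → ℝ) (a b : ℝ) :
    proj (a • x + b • w) = a • proj x + b • proj w := rfl

theorem sq_lt_sq_of_mem_Hyp_of_mink_eq_zero {x w : Fin (n + 1) → ℝ} (hx : x ∈ Hyp n)
    (hw : mink w w = 1) (hxw : mink x w = 0) : w 0 ^ 2 < x 0 ^ 2 := by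
  have cauchy_schwarz := real_inner_mul_inner_self_le (proj x) (proj w)
  rw [inner_proj, inner_proj, inner_proj, hx.1, hw, hxw] at cauchy_schwarz
  nlinarith

theorem cosh_smul_add_sinh_smul_mem_Hyp {x w : Fin (n + 1) → ℝ} (hx : x ∈ Hyp n)
    (hw : mink w w = 1) (hxw : mink x w = 0) (t : ℝ) : cosh t • x + sinh t • w ∈ Hyp n := by
  refine ⟨?_, ?_⟩
  · rw [mink_smul_add_smul_self, hx.1, hw, hxw]
    linear_combination -cosh_sq_sub_sinh_sq t
  · have hw0 := sq_lt_sq_of_mem_Hyp_of_mink_eq_zero hx hw hxw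
    have hsq : (sinh t * w 0) ^ 2 < (cosh t * x 0) ^ 2 := by
      nlinarith [cosh_sq_sub_sinh_sq t, sq_nonneg (sinh t), sq_nonneg (w 0)]
    have := (abs_lt_of_sq_lt_sq' hsq (mul_pos (cosh_pos t) hx.2).le).1
    simp only [Pi.add_apply, Pi.smul_apply, smul_eq_mul]
    linarith

end Minkowski

section Pogorelov

variable {n : ℕ}

theorem P2_eq_P1_swap (u v : Fin (n + 1) → ℝ) : P2 u v = P1 v u := by
  rw [P1, P2, add_comm]

theorem P1_eq_inv_smul (u v : Fin (n + 1) → ℝ) :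
    P1 u v = (u 0 + v 0)⁻¹ • (2 : ℝ) • proj u := by
  rw [P1, mink_eVec, smul_smul]
  simp [div_eq_mul_inv, mul_comm]

theorem P1_smul_add_smul_mem_segment {u₁ u₂ v₁ v₂ : Fin (n + 1) → ℝ} {a b : ℝ}
    (h₁ : 0 < u₁ 0 + v₁ 0) (h₂ : 0 < u₂ 0 + v₂ 0) (ha : 0 ≤ a) (hb : 0 ≤ b)
    (hab : 0 < (a • u₁ + b • u₂) 0 + (a • v₁ + b • v₂) 0) :
    P1 (a • u₁ + b • u₂) (a • v₁ + b • v₂) ∈ segment ℝ (P1 u₁ v₁) (P1 u₂ v₂) := by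
  have hsum : (a • u₁ + b • u₂) 0 + (a • v₁ + b • v₂) 0 =
      a * (u₁ 0 + v₁ 0) + b * (u₂ 0 + v₂ 0) := by
    simp only [Pi.add_apply, Pi.smul_apply, smul_eq_mul]
    ring
  rw [hsum] at hab
  rw [P1_eq_inv_smul, P1_eq_inv_smul, P1_eq_inv_smul, hsum, proj_smul_add_smul, smul_add,
    smul_comm (2 : ℝ) a, smul_comm (2 : ℝ) b]
  exact perspective_mem_segment h₁ h₂ ha hb hab _ _

theorem norm_P1_sub_P1_eq_norm_P2_sub_P2 {u₁ u₂ v₁ v₂ : Fin (n + 1) → ℝ}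
    (h₁ : u₁ 0 + v₁ 0 ≠ 0) (h₂ : u₂ 0 + v₂ 0 ≠ 0) (h₁₁ : mink u₁ u₁ = mink v₁ v₁)
    (h₂₂ : mink u₂ u₂ = mink v₂ v₂) (h₁₂ : mink u₁ u₂ = mink v₁ v₂) :
    ‖P1 u₁ v₁ - P1 u₂ v₂‖ = ‖P2 u₁ v₁ - P2 u₂ v₂‖ := by
  set c₁ := 2 / (u₁ 0 + v₁ 0)
  set c₂ := 2 / (u₂ 0 + v₂ 0)
  have hP1 : P1 u₁ v₁ - P1 u₂ v₂ = proj (c₁ • u₁ + (-c₂) • u₂) := by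
    rw [proj_smul_add_smul, neg_smul, ← sub_eq_add_neg, P1, P1, mink_eVec, mink_eVec]
    simp [c₁, c₂]
  have hP2 : P2 u₁ v₁ - P2 u₂ v₂ = proj (c₁ • v₁ + (-c₂) • v₂) := by
    rw [proj_smul_add_smul, neg_smul, ← sub_eq_add_neg, P2, P2, mink_eVec, mink_eVec]
    simp [c₁, c₂]
  -- `c₁ (u₁ + v₁)₀ = c₂ (u₂ + v₂)₀ = 2`, so the time coordinates of the two differences cancel.
  have htime : (c₁ • u₁ + (-c₂) • u₂) 0 = -(c₁ • v₁ + (-c₂) • v₂) 0 := by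
    simp only [Pi.add_apply, Pi.smul_apply, smul_eq_mul, c₁, c₂]
    field_simp
    ring
  rw [hP1, hP2, ← sq_eq_sq₀ (norm_nonneg _) (norm_nonneg _), norm_proj_sq, norm_proj_sq,
    mink_smul_add_smul_self, mink_smul_add_smul_self, h₁₁, h₂₂, h₁₂, htime]
  ring

end Pogorelov

theorem P1_geodesic_mem_segment {n : ℕ} {x y w z : Fin (n + 1) → ℝ} (hx : x ∈ Hyp n)
    (hy : y ∈ Hyp n) (hw : mink w w = 1) (hz : mink z z = 1) (hxw : mink x w = 0)
    (hyz : mink y z = 0) {l t : ℝ} (hl : 0 < l) (ht : t ∈ Set.Icc 0 l) :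
    P1 (cosh t • x + sinh t • w) (cosh t • y + sinh t • z) ∈
      segment ℝ (P1 x y) (P1 (cosh l • x + sinh l • w) (cosh l • y + sinh l • z)) := by
  have hsl : 0 < sinh l := sinh_pos_iff.mpr hl
  have hpos : ∀ s, 0 < (cosh s • x + sinh s • w) 0 + (cosh s • y + sinh s • z) 0 := fun s =>
    add_pos (cosh_smul_add_sinh_smul_mem_Hyp hx hw hxw s).2
      (cosh_smul_add_sinh_smul_mem_Hyp hy hz hyz s).2
  have ht' := hpos t
  rw [cosh_smul_add_sinh_smul_eq hsl.ne' t x w, cosh_smul_add_sinh_smul_eq hsl.ne' t y z]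
    at ht' ⊢
  exact P1_smul_add_smul_mem_segment (add_pos hx.2 hy.2) (hpos l)
    (div_nonneg (sinh_nonneg_iff.mpr (sub_nonneg.mpr ht.2)) hsl.le)
    (div_nonneg (sinh_nonneg_iff.mpr ht.1) hsl.le) ht'

theorem exists_Icc_eq_of_mem_segment {E : Type*} [AddCommGroup E] [Module ℝ E] {p a b : E}
    (h : p ∈ segment ℝ a b) : ∃ s ∈ Set.Icc (0 : ℝ) 1, p = (1 - s) • a + s • b := by
  obtain ⟨s, hs, rfl⟩ := (segment_eq_image ℝ a b).subset h
  exact ⟨s, hs, rfl⟩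

theorem statement_3_general {n : ℕ} (x y w z : Fin (n + 1) → ℝ)
    (hx : x ∈ Hyp n) (hy : y ∈ Hyp n)
    (hw : mink w w = 1) (hz : mink z z = 1)
    (hxw : mink x w = 0) (hyz : mink y z = 0)
    (l : ℝ) (hl : 0 < l)
    (α β : ℝ → Fin (n + 1) → ℝ)
    (hα : ∀ t, α t = Real.cosh t • x + Real.sinh t • w)
    (hβ : ∀ t, β t = Real.cosh t • y + Real.sinh t • z)
    (γ δ : ℝ → EuclideanSpace ℝ (Fin n))
    (hγ : ∀ t, γ t = P1 (α t) (β t)) (hδ : ∀ t, δ t = P2 (α t) (β t)) :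
    (∀ t ∈ Set.Icc (0 : ℝ) l, ∃ s ∈ Set.Icc (0 : ℝ) 1,
        γ t = (1 - s) • γ 0 + s • γ l) ∧
    (∀ t ∈ Set.Icc (0 : ℝ) l, ∃ s ∈ Set.Icc (0 : ℝ) 1,
        δ t = (1 - s) • δ 0 + s • δ l) ∧
    ‖γ 0 - γ l‖ = ‖δ 0 - δ l‖ := by
  obtain rfl : α = fun t => cosh t • x + sinh t • w := funext hα
  obtain rfl : β = fun t => cosh t • y + sinh t • z := funext hβ
  have hγ0 : γ 0 = P1 x y := by simp [hγ]
  have hδ0 : δ 0 = P2 x y := by simp [hδ]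
  refine ⟨fun t ht => ?_, fun t ht => ?_, ?_⟩
  · rw [hγ, hγ0, hγ]
    exact exists_Icc_eq_of_mem_segment (P1_geodesic_mem_segment hx hy hw hz hxw hyz hl ht)
  · rw [hδ, hδ0, hδ, P2_eq_P1_swap, P2_eq_P1_swap, P2_eq_P1_swap]
    exact exists_Icc_eq_of_mem_segment (P1_geodesic_mem_segment hy hx hz hw hyz hxw hl ht)
  · have hαl := cosh_smul_add_sinh_smul_mem_Hyp hx hw hxw l
    have hβl := cosh_smul_add_sinh_smul_mem_Hyp hy hz hyz l
    rw [hγ0, hδ0, hγ, hδ]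
    refine norm_P1_sub_P1_eq_norm_P2_sub_P2 (add_pos hx.2 hy.2).ne' (add_pos hαl.2 hβl.2).ne'
      (by rw [hx.1, hy.1]) (by rw [hαl.1, hβl.1]) ?_
    rw [mink_smul_add_smul_right, mink_smul_add_smul_right, hx.1, hxw, hy.1, hyz]

/-- the Pogorelov map sends a pair of geodesic segments of the same
length in `Hⁿ` to a pair of line segments of the same length in `ℝⁿ`. -/
theorem statement_3 {n : ℕ} (hn : 1 ≤ n) (x y w z : Fin (n + 1) → ℝ)
    (hx : x ∈ Hyp n) (hy : y ∈ Hyp n)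
    (hw : mink w w = 1) (hz : mink z z = 1)
    (hxw : mink x w = 0) (hyz : mink y z = 0)
    (l : ℝ) (hl : 0 < l)
    (α β : ℝ → Fin (n + 1) → ℝ)
    (hα : ∀ t, α t = Real.cosh t • x + Real.sinh t • w)
    (hβ : ∀ t, β t = Real.cosh t • y + Real.sinh t • z)
    (γ δ : ℝ → EuclideanSpace ℝ (Fin n))
    (hγ : ∀ t, γ t = P1 (α t) (β t)) (hδ : ∀ t, δ t = P2 (α t) (β t)) :
    (∀ t ∈ Set.Icc (0 : ℝ) l, ∃ s ∈ Set.Icc (0 : ℝ) 1,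
        γ t = (1 - s) • γ 0 + s • γ l) ∧
    (∀ t ∈ Set.Icc (0 : ℝ) l, ∃ s ∈ Set.Icc (0 : ℝ) 1,
        δ t = (1 - s) • δ 0 + s • δ l) ∧
    ‖γ 0 - γ l‖ = ‖δ 0 - δ l‖ :=
  statement_3_general x y w z hx hy hw hz hxw hyz l hl α β hα hβ γ δ hγ hδ
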